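/- For every $\omega \in \Omega$, the random attractor satisfies $\dim_P F_\omega = \overline{\dim}_B F_\omega$, i.e., the packing dimension and the upper box dimension of every random attractor of a RIFS of bi-Lipschitz contractions coincide. -/

import Mathlib

/-!
The inequality `dim_P F ≤ dim_B F` holds for every set of a compact metric space: sorting the
balls of a packing by dyadic scale bounds the packing pre-measure by a geometric series.

For the converse, `F_ω` is compact, so by Baire every countable cover `⋃ Eₙ ⊇ F_ω` has a member
dense in some ball centred in `F_ω`. That ball contains a bi-Lipschitz image of a shifted attractor
`F_{σᵏω}`, and `dim_B F_ω ≤ dim_B F_{σᵏω}` because `F_ω` is a finite union of Lipschitz images of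
`F_{σω}`. A set of upper box dimension `> s` has infinite `s`-packing pre-measure, and so does any
set dense in it; hence `𝒫^s(F_ω) = ∞` for every `s < dim_B F_ω`.
-/

open Metric MeasureTheory Filter Set
open scoped ENNReal NNReal

/-- Packing pre-measure with respect to the gauge `G` (applied to the diameters `2r`
of the balls of a countable centred `δ`-packing), as `δ → 0`. -/
noncomputable def packingPre {K : Type*} [MetricSpace K] (G : ℝ → ℝ) (F : Set K) : ℝ≥0∞ :=
  ⨅ (δ : ℝ) (_ : 0 < δ),
    ⨆ (s : Set ℕ) (c : ℕ → K) (r : ℕ → ℝ)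
      (_ : ∀ n ∈ s, c n ∈ F ∧ 0 < r n ∧ 2 * r n ≤ δ)
      (_ : s.PairwiseDisjoint fun n => Metric.closedBall (c n) (r n)),
      ∑' n : s, ENNReal.ofReal (G (2 * r n))

/-- Packing measure with respect to the gauge `G`. -/
noncomputable def packingMeasure {K : Type*} [MetricSpace K] (G : ℝ → ℝ) (F : Set K) : ℝ≥0∞ :=
  ⨅ (E : ℕ → Set K) (_ : F ⊆ ⋃ n, E n), ∑' n, packingPre G (E n)

/-- Packing dimension, defined from the packing measures `𝒫^s`. -/
noncomputable def packingDim {K : Type*} [MetricSpace K] (F : Set K) : ℝ≥0∞ :=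
  ⨆ (s : ℝ) (_ : 0 ≤ s) (_ : packingMeasure (fun t => t ^ s) F = ⊤), ENNReal.ofReal s

/-- `N_δ(F)`: the smallest number of open sets of diameter at most `δ` needed to cover `F`. -/
noncomputable def coverNum {K : Type*} [MetricSpace K] (F : Set K) (δ : ℝ) : ℝ≥0∞ :=
  ⨅ (t : Finset (Set K)) (_ : ∀ U ∈ t, IsOpen U ∧ Metric.diam U ≤ δ) (_ : F ⊆ ⋃ U ∈ t, U),
    (t.card : ℝ≥0∞)

/-- Lower box(-counting) dimension. -/
noncomputable def lowerBoxDim {K : Type*} [MetricSpace K] (F : Set K) : ℝ≥0∞ :=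
  Filter.liminf
    (fun δ : ℝ => ENNReal.ofReal (Real.log (coverNum F δ).toReal / -Real.log δ))
    (nhdsWithin 0 (Set.Ioi 0))

/-- Upper box(-counting) dimension. -/
noncomputable def upperBoxDim {K : Type*} [MetricSpace K] (F : Set K) : ℝ≥0∞ :=
  Filter.limsup
    (fun δ : ℝ => ENNReal.ofReal (Real.log (coverNum F δ).toReal / -Real.log δ))
    (nhdsWithin 0 (Set.Ioi 0))

/-- The level-`k` approximation of the random attractor: the union over all length-`k`
words `(i₁,…,i_k)` with `i_l ∈ 𝓘_{ω_l}` of `S_{ω₁,i₁} ∘ ⋯ ∘ S_{ω_k,i_k}(K₀)`. -/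
def levelSets {X : Type*} {N : ℕ} (m : Fin N → ℕ) (S : ∀ i, Fin (m i) → X → X) (K₀ : Set X) :
    (ℕ → Fin N) → ℕ → Set X
  | _, 0 => K₀
  | ω, k+1 => ⋃ j : Fin (m (ω 0)), S (ω 0) j '' levelSets m S K₀ (fun n => ω (n+1)) k

/-- The random attractor `F_ω = ⋂_k ⋃_{i₁,…,i_k} S_{ω₁,i₁} ∘ ⋯ ∘ S_{ω_k,i_k}(K₀)`. -/
def attractorOf {X : Type*} {N : ℕ} (m : Fin N → ℕ) (S : ∀ i, Fin (m i) → X → X)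
    (K₀ : Set X) (ω : ℕ → Fin N) : Set X :=
  ⋂ k, levelSets m S K₀ ω k

/-- `φ` is a bi-Lipschitz contraction. -/
def IsBiLipContraction {K : Type*} [MetricSpace K] (φ : K → K) : Prop :=
  ∃ c C : ℝ, 0 < c ∧ C < 1 ∧
    ∀ x y, c * dist x y ≤ dist (φ x) (φ y) ∧ dist (φ x) (φ y) ≤ C * dist x y

open Topology

section CoverNum

variable {X : Type*} [MetricSpace X] {F A B : Set X} {δ : ℝ}

lemma coverNum_le_card {t : Finset (Set X)} (ht : ∀ U ∈ t, IsOpen U ∧ diam U ≤ δ)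
    (hF : F ⊆ ⋃ U ∈ t, U) : coverNum F δ ≤ t.card :=
  iInf₂_le_of_le t ht (iInf_le_of_le hF le_rfl)

lemma le_coverNum {a : ℝ≥0∞}
    (h : ∀ t : Finset (Set X), (∀ U ∈ t, IsOpen U ∧ diam U ≤ δ) → F ⊆ ⋃ U ∈ t, U → a ≤ t.card) :
    a ≤ coverNum F δ :=
  le_iInf₂ fun t ht => le_iInf (h t ht)

lemma coverNum_mono (h : A ⊆ B) : coverNum A δ ≤ coverNum B δ :=
  le_coverNum fun _t ht hB => coverNum_le_card ht (h.trans hB)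

lemma coverNum_empty : coverNum (∅ : Set X) δ = 0 :=
  nonpos_iff_eq_zero.1 <| by
    simpa using coverNum_le_card (F := (∅ : Set X)) (t := ∅) (δ := δ) (by simp) (empty_subset _)

lemma pairwise_dist_update_range_succ {c : ℕ → X} {n : ℕ} {a : X} {ρ : ℝ}
    (hsep : (↑(Finset.range n) : Set ℕ).Pairwise fun i j => ρ ≤ dist (c i) (c j))
    (ha : ∀ i < n, ρ ≤ dist a (c i)) :
    (↑(Finset.range (n + 1)) : Set ℕ).Pairwise fun i j =>
      ρ ≤ dist (Function.update c n a i) (Function.update c n a j) := by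
  intro i hi j hj hij
  simp only [Finset.coe_range, mem_Iio] at hi hj
  rcases Nat.lt_succ_iff_lt_or_eq.1 hi with hi | rfl <;>
    rcases Nat.lt_succ_iff_lt_or_eq.1 hj with hj | rfl
  · simpa [Function.update_of_ne hi.ne, Function.update_of_ne hj.ne] using
      hsep (by simpa using hi) (by simpa using hj) hij
  · simpa [Function.update_of_ne hi.ne, dist_comm] using ha i hi
  · simpa [Function.update_of_ne hj.ne] using ha j hj
  · exact absurd rfl hij

variable [CompactSpace X]

lemma exists_finite_open_cover_diam_le (F : Set X) (hδ : 0 < δ) :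
    ∃ t : Finset (Set X), (∀ U ∈ t, IsOpen U ∧ diam U ≤ δ) ∧ F ⊆ ⋃ U ∈ t, U := by
  obtain ⟨s, hs⟩ := (isCompact_univ (X := X)).elim_finite_subcover (ball · (δ / 2))
    (fun _ => isOpen_ball) fun x _ => mem_iUnion.2 ⟨x, mem_ball_self (half_pos hδ)⟩
  classical
  refine ⟨s.image (ball · (δ / 2)), ?_, fun x _ => ?_⟩
  · simp only [Finset.mem_image, forall_exists_index, and_imp, forall_apply_eq_imp_iff₂]
    exact fun x _ => ⟨isOpen_ball, (diam_ball (by positivity)).trans_eq (by ring)⟩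
  · obtain ⟨y, hy, hxy⟩ := mem_iUnion₂.1 (hs (mem_univ x))
    exact mem_iUnion₂.2 ⟨_, Finset.mem_image_of_mem _ hy, hxy⟩

lemma coverNum_lt_top (F : Set X) (hδ : 0 < δ) : coverNum F δ < ⊤ :=
  let ⟨_t, ht, hF⟩ := exists_finite_open_cover_diam_le F hδ
  (coverNum_le_card ht hF).trans_lt (ENNReal.natCast_lt_top _)

lemma exists_cover_card_eq_coverNum (F : Set X) (hδ : 0 < δ) :
    ∃ t : Finset (Set X), (∀ U ∈ t, IsOpen U ∧ diam U ≤ δ) ∧ (F ⊆ ⋃ U ∈ t, U) ∧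
      (t.card : ℝ≥0∞) = coverNum F δ := by
  classical
  have hex : ∃ n : ℕ, ∃ t : Finset (Set X),
      (∀ U ∈ t, IsOpen U ∧ diam U ≤ δ) ∧ (F ⊆ ⋃ U ∈ t, U) ∧ t.card = n := by
    obtain ⟨t, ht, hF⟩ := exists_finite_open_cover_diam_le F hδ
    exact ⟨_, t, ht, hF, rfl⟩
  obtain ⟨t, ht, hF, hcard⟩ := Nat.find_spec hex
  refine ⟨t, ht, hF, le_antisymm ?_ (coverNum_le_card ht hF)⟩
  exact le_coverNum fun t' ht' hF' => by
    exact_mod_cast hcard.trans_le (Nat.find_le ⟨t', ht', hF', rfl⟩)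

lemma coverNum_iUnion_le {ι : Type*} [Fintype ι] (A : ι → Set X) (hδ : 0 < δ) :
    coverNum (⋃ i, A i) δ ≤ ∑ i, coverNum (A i) δ := by
  classical
  choose t ht hA hcard using fun i => exists_cover_card_eq_coverNum (A i) hδ
  calc coverNum (⋃ i, A i) δ ≤ (Finset.univ.biUnion t).card := by
        refine coverNum_le_card (fun U hU => ?_) (iUnion_subset fun i => (hA i).trans ?_)
        · obtain ⟨i, -, hUi⟩ := Finset.mem_biUnion.1 hU
          exact ht i U hUi
        exact biUnion_subset_biUnion_left fun U hU =>
          Finset.mem_biUnion.2 ⟨i, Finset.mem_univ _, hU⟩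
    _ ≤ ∑ i, ((t i).card : ℝ≥0∞) := by exact_mod_cast Finset.card_biUnion_le
    _ = ∑ i, coverNum (A i) δ := Finset.sum_congr rfl fun i _ => hcard i

/-- Points of `F` that are `ρ`-separated lie in pairwise different sets of any `δ`-cover. -/
lemma card_le_coverNum {ι : Type*} {u : Finset ι} {c : ι → X} {ρ : ℝ}
    (hc : ∀ i ∈ u, c i ∈ F) (hsep : (u : Set ι).Pairwise fun i j => ρ ≤ dist (c i) (c j))
    (hδ : δ < ρ) : (u.card : ℝ≥0∞) ≤ coverNum F δ := by
  refine le_coverNum fun t ht hF => ?_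
  have hmem : ∀ i ∈ u, ∃ U ∈ t, c i ∈ U := fun i hi => by
    simpa using hF (hc i hi)
  choose! V hVt hcV using hmem
  refine Nat.cast_le.2 (Finset.card_le_card_of_injOn V hVt fun i hi j hj hij => ?_)
  by_contra hne
  have hdiam : dist (c i) (c j) ≤ diam (V i) :=
    dist_le_diam_of_mem isBounded_of_compactSpace (hcV i hi) (hij ▸ hcV j hj)
  linarith [hsep hi hj hne, (ht _ (hVt i hi)).2]

/-- A maximal `ρ`-separated family in `F` is a `ρ`-net, so its size bounds `N_{2ρ}(F)`. -/
lemma exists_separated_coverNum_two_mul_le (hF : F.Nonempty) {ρ : ℝ} (hρ : 0 < ρ) :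
    ∃ (n : ℕ) (c : ℕ → X), (∀ i < n, c i ∈ F) ∧
      (↑(Finset.range n) : Set ℕ).Pairwise (fun i j => ρ ≤ dist (c i) (c j)) ∧
      coverNum F (2 * ρ) ≤ n := by
  classical
  let P : ℕ → Prop := fun n => ∃ c : ℕ → X, (∀ i < n, c i ∈ F) ∧
      (↑(Finset.range n) : Set ℕ).Pairwise (fun i j => ρ ≤ dist (c i) (c j))
  obtain ⟨B, hB⟩ := ENNReal.exists_nat_gt (coverNum_lt_top F (half_pos hρ)).ne
  have hbound : ∀ n, P n → n ≤ B := fun n ⟨c, hc, hsep⟩ => by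
    have h := card_le_coverNum (u := Finset.range n) (fun i hi => hc i (Finset.mem_range.1 hi))
      hsep (half_lt_self hρ)
    rw [Finset.card_range] at h
    exact_mod_cast (h.trans_lt hB).le
  have hP0 : P 0 := ⟨fun _ => hF.some, by simp, by simp⟩
  obtain ⟨c, hcF, hsep⟩ : P (Nat.findGreatest P B) := Nat.findGreatest_spec (Nat.zero_le _) hP0
  set n := Nat.findGreatest P B
  refine ⟨n, c, hcF, hsep, ?_⟩
  have hnet : ∀ a ∈ F, ∃ i < n, dist a (c i) < ρ := by
    intro a ha
    by_contra! hfar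
    have hPn : P (n + 1) := by
      refine ⟨Function.update c n a, fun i hi => ?_, pairwise_dist_update_range_succ hsep hfar⟩
      rcases Nat.lt_succ_iff_lt_or_eq.1 hi with hi | rfl
      · rw [Function.update_of_ne hi.ne]; exact hcF i hi
      · rwa [Function.update_self]
    exact Nat.findGreatest_is_greatest (Nat.lt_succ_self n) (hbound _ hPn) hPn
  calc coverNum F (2 * ρ) ≤ ((Finset.range n).image fun i => ball (c i) ρ).card := by
        refine coverNum_le_card ?_ fun a ha => ?_
        · simp only [Finset.mem_image, forall_exists_index, and_imp, forall_apply_eq_imp_iff₂]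
          exact fun i _ => ⟨isOpen_ball, diam_ball hρ.le⟩
        · obtain ⟨i, hi, hai⟩ := hnet a ha
          exact mem_iUnion₂.2 ⟨_, Finset.mem_image_of_mem _ (Finset.mem_range.2 hi), hai⟩
    _ ≤ n := by exact_mod_cast Finset.card_image_le.trans_eq (Finset.card_range n)

end CoverNum

section ImageCoverNum

variable {X Y : Type*} [MetricSpace X] [MetricSpace Y] {δ : ℝ}

lemma coverNum_closure_image_le [CompactSpace X] {f : X → Y} {L : ℝ≥0} (hf : LipschitzWith L f)
    (A : Set X) (hδ : 0 < δ) : coverNum (closure (f '' A)) ((L + 2) * δ) ≤ coverNum A δ := by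
  classical
  refine le_coverNum fun t ht hA => ?_
  refine (coverNum_le_card (t := t.image fun U => thickening δ (f '' U)) ?_ ?_).trans
    (by exact_mod_cast Finset.card_image_le)
  · simp only [Finset.mem_image, forall_exists_index, and_imp, forall_apply_eq_imp_iff₂]
    refine fun U hU => ⟨isOpen_thickening, (diam_thickening_le _ hδ.le).trans ?_⟩
    have := hf.diam_image_le U isBounded_of_compactSpace
    nlinarith [(ht U hU).2, L.2]
  · intro y hy
    obtain ⟨_, ⟨x, hxA, rfl⟩, hyx⟩ := Metric.mem_closure_iff.1 hy δ hδ
    obtain ⟨U, hU, hxU⟩ := mem_iUnion₂.1 (hA hxA)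
    exact mem_iUnion₂.2 ⟨_, Finset.mem_image_of_mem _ hU,
      mem_thickening_iff.2 ⟨f x, mem_image_of_mem f hxU, hyx⟩⟩

lemma coverNum_le_coverNum_image [CompactSpace Y] {f : X → Y} {K : ℝ≥0}
    (hf : AntilipschitzWith K f) (hcont : Continuous f) (A : Set X) (hδ : 0 ≤ δ) :
    coverNum A (K * δ) ≤ coverNum (f '' A) δ := by
  classical
  refine le_coverNum fun t ht hA => ?_
  refine (coverNum_le_card (t := t.image (f ⁻¹' ·)) ?_ ?_).trans
    (by exact_mod_cast Finset.card_image_le)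
  · simp only [Finset.mem_image, forall_exists_index, and_imp, forall_apply_eq_imp_iff₂]
    refine fun W hW => ⟨(ht W hW).1.preimage hcont,
      diam_le_of_forall_dist_le (by positivity) fun x hx y hy => ?_⟩
    calc dist x y ≤ K * dist (f x) (f y) := hf.le_mul_dist x y
      _ ≤ K * δ := by
        gcongr
        exact (dist_le_diam_of_mem isBounded_of_compactSpace (show f x ∈ W from hx)
          (show f y ∈ W from hy)).trans (ht W hW).2
  · intro x hx
    obtain ⟨W, hW, hxW⟩ := mem_iUnion₂.1 (hA (mem_image_of_mem f hx))
    exact mem_iUnion₂.2 ⟨_, Finset.mem_image_of_mem _ hW, hxW⟩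

end ImageCoverNum

lemma ENNReal.le_of_forall_ofReal_gt_imp_ge {a b : ℝ≥0∞}
    (h : ∀ t : ℝ, 0 ≤ t → b < ENNReal.ofReal t → a ≤ ENNReal.ofReal t) : a ≤ b :=
  le_of_forall_gt_imp_ge_of_dense fun _c hc =>
    let ⟨t, ht, hbt, htc⟩ := ENNReal.lt_iff_exists_real_btwn.1 hc
    (h t ht hbt).trans htc.le

lemma tendsto_const_mul_nhdsGT_zero {a : ℝ} (ha : 0 < a) :
    Tendsto (a * ·) (𝓝[>] 0) (𝓝[>] 0) :=
  tendsto_nhdsWithin_iff.2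
    ⟨((continuous_const_mul a).tendsto' 0 0 (mul_zero a)).mono_left nhdsWithin_le_nhds,
      eventually_nhdsWithin_of_forall fun _ hδ => mul_pos ha hδ⟩

section UpperBoxDim

variable {X Y : Type*} [MetricSpace X] [MetricSpace Y] {F : Set X} {t : ℝ}

/-- For `N = 0` both sides hold, since `Real.log 0 = 0`. -/
lemma ofReal_log_div_le_ofReal_iff {N : ℝ≥0∞} (hN : N ≠ ⊤) {δ : ℝ} (hδ0 : 0 < δ) (hδ1 : δ < 1)
    (ht : 0 ≤ t) :
    ENNReal.ofReal (Real.log N.toReal / -Real.log δ) ≤ ENNReal.ofReal t ↔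
      N ≤ ENNReal.ofReal (δ ^ (-t)) := by
  have hlog : 0 < -Real.log δ := neg_pos.2 (Real.log_neg hδ0 hδ1)
  rw [ENNReal.ofReal_le_ofReal_iff ht, div_le_iff₀ hlog,
    ENNReal.le_ofReal_iff_toReal_le hN (by positivity)]
  rcases (ENNReal.toReal_nonneg (a := N)).eq_or_lt with h0 | hpos
  · rw [← h0, Real.log_zero]
    exact iff_of_true (by positivity) (by positivity)
  · rw [← Real.log_le_log_iff hpos (by positivity), Real.log_rpow hδ0]
    constructor <;> intro h <;> linarith

lemma upperBoxDim_le_of_eventually_coverNum_le (ht : 0 ≤ t)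
    (h : ∀ᶠ δ in 𝓝[>] 0, coverNum F δ ≤ ENNReal.ofReal (δ ^ (-t))) :
    upperBoxDim F ≤ ENNReal.ofReal t :=
  limsup_le_of_le isCobounded_le_of_bot <| by
    filter_upwards [h, Ioo_mem_nhdsGT one_pos] with δ hδ hδ1
    exact (ofReal_log_div_le_ofReal_iff (ne_top_of_le_ne_top ENNReal.ofReal_ne_top hδ)
      hδ1.1 hδ1.2 ht).2 hδ

lemma upperBoxDim_le_of_eventually_coverNum_le_mul {C : ℝ} (ht : 0 ≤ t)
    (h : ∀ᶠ δ in 𝓝[>] 0, coverNum F δ ≤ ENNReal.ofReal (C * δ ^ (-t))) :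
    upperBoxDim F ≤ ENNReal.ofReal t := by
  refine ENNReal.le_of_forall_pos_le_add fun ε hε _ => ?_
  rw [← ENNReal.ofReal_coe_nnreal, ← ENNReal.ofReal_add ht ε.coe_nonneg]
  refine upperBoxDim_le_of_eventually_coverNum_le (by positivity) ?_
  have hlarge := (tendsto_rpow_neg_nhdsGT_zero (neg_lt_zero.2 hε)).eventually_ge_atTop C
  filter_upwards [h, hlarge, self_mem_nhdsWithin] with δ hδ hC (hpos : 0 < δ)
  refine hδ.trans (ENNReal.ofReal_le_ofReal ?_)
  rw [neg_add, Real.rpow_add hpos, mul_comm C]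
  exact mul_le_mul_of_nonneg_left hC (Real.rpow_nonneg hpos.le _)

lemma upperBoxDim_empty : upperBoxDim (∅ : Set X) = 0 :=
  nonpos_iff_eq_zero.1 <| by
    simpa using upperBoxDim_le_of_eventually_coverNum_le (F := (∅ : Set X)) le_rfl
      (.of_forall fun δ => by simp [coverNum_empty])

variable [CompactSpace X]

lemma eventually_coverNum_le_of_upperBoxDim_lt (h : upperBoxDim F < ENNReal.ofReal t) :
    ∀ᶠ δ in 𝓝[>] 0, coverNum F δ ≤ ENNReal.ofReal (δ ^ (-t)) := by
  have ht : 0 ≤ t := by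
    by_contra! ht
    simp [ENNReal.ofReal_of_nonpos ht.le] at h
  filter_upwards [eventually_lt_of_limsup_lt h, Ioo_mem_nhdsGT one_pos] with δ hδ hδ1
  exact (ofReal_log_div_le_ofReal_iff (coverNum_lt_top F hδ1.1).ne hδ1.1 hδ1.2 ht).1 hδ.le

lemma frequently_lt_coverNum_of_lt_upperBoxDim (ht : 0 ≤ t)
    (h : ENNReal.ofReal t < upperBoxDim F) :
    ∃ᶠ δ in 𝓝[>] 0, ENNReal.ofReal (δ ^ (-t)) < coverNum F δ := by
  refine ((frequently_lt_of_lt_limsup (by isBoundedDefault) h).and_eventually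
    (Ioo_mem_nhdsGT one_pos)).mono fun δ ⟨hδ, hδ1⟩ => not_le.1 fun hle => hδ.not_ge ?_
  exact (ofReal_log_div_le_ofReal_iff (coverNum_lt_top F hδ1.1).ne hδ1.1 hδ1.2 ht).2 hle

lemma upperBoxDim_le_of_eventually_coverNum_le_coverNum {A : Set Y} {a : ℝ} (ha : 0 < a)
    (h : ∀ᶠ δ in 𝓝[>] 0, coverNum A δ ≤ coverNum F (a * δ)) : upperBoxDim A ≤ upperBoxDim F := by
  refine ENNReal.le_of_forall_ofReal_gt_imp_ge fun t ht hFt => ?_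
  refine upperBoxDim_le_of_eventually_coverNum_le_mul (C := a ^ (-t)) ht ?_
  filter_upwards [h, (tendsto_const_mul_nhdsGT_zero ha).eventually
    (eventually_coverNum_le_of_upperBoxDim_lt hFt), self_mem_nhdsWithin] with δ h1 h2 (hδ : 0 < δ)
  rw [← Real.mul_rpow ha.le hδ.le]
  exact h1.trans h2

lemma upperBoxDim_mono {A : Set X} (h : A ⊆ F) : upperBoxDim A ≤ upperBoxDim F :=
  upperBoxDim_le_of_eventually_coverNum_le_coverNum one_pos <|
    .of_forall fun δ => (one_mul δ).symm ▸ coverNum_mono h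

lemma upperBoxDim_iUnion_le {ι : Type*} [Finite ι] (A : ι → Set X) :
    upperBoxDim (⋃ i, A i) ≤ ⨆ i, upperBoxDim (A i) := by
  have := Fintype.ofFinite ι
  refine ENNReal.le_of_forall_ofReal_gt_imp_ge fun t ht hlt => ?_
  refine upperBoxDim_le_of_eventually_coverNum_le_mul (C := Fintype.card ι) ht ?_
  have hA : ∀ i, ∀ᶠ δ in 𝓝[>] 0, coverNum (A i) δ ≤ ENNReal.ofReal (δ ^ (-t)) := fun i =>
    eventually_coverNum_le_of_upperBoxDim_lt ((le_iSup _ i).trans_lt hlt)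
  filter_upwards [eventually_all.2 hA, self_mem_nhdsWithin] with δ hδ (hpos : 0 < δ)
  calc coverNum (⋃ i, A i) δ ≤ ∑ i, coverNum (A i) δ := coverNum_iUnion_le A hpos
    _ ≤ ∑ _i : ι, ENNReal.ofReal (δ ^ (-t)) := Finset.sum_le_sum fun i _ => hδ i
    _ = ENNReal.ofReal (Fintype.card ι * δ ^ (-t)) := by
      rw [ENNReal.ofReal_mul (by positivity), ENNReal.ofReal_natCast, Finset.sum_const,
        Finset.card_univ, nsmul_eq_mul]

lemma upperBoxDim_closure_le (F : Set X) : upperBoxDim (closure F) ≤ upperBoxDim F := by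
  refine upperBoxDim_le_of_eventually_coverNum_le_coverNum (a := 3⁻¹) (by norm_num) ?_
  filter_upwards [self_mem_nhdsWithin] with δ (hδ : 0 < δ)
  have h := coverNum_closure_image_le LipschitzWith.id F (δ := 3⁻¹ * δ) (by positivity)
  rwa [image_id, NNReal.coe_one, show (1 : ℝ) + 2 = 3 by norm_num,
    mul_inv_cancel_left₀ three_ne_zero] at h

lemma upperBoxDim_image_le {f : X → Y} {L : ℝ≥0} (hf : LipschitzWith L f) (A : Set X) :
    upperBoxDim (f '' A) ≤ upperBoxDim A := by
  refine upperBoxDim_le_of_eventually_coverNum_le_coverNum (a := ((L : ℝ) + 2)⁻¹)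
    (by positivity) ?_
  filter_upwards [self_mem_nhdsWithin] with δ (hδ : 0 < δ)
  have h := coverNum_closure_image_le hf A (δ := ((L : ℝ) + 2)⁻¹ * δ) (by positivity)
  rw [mul_inv_cancel_left₀ (by positivity)] at h
  exact (coverNum_mono subset_closure).trans h

lemma le_upperBoxDim_image {f : Y → X} {K : ℝ≥0} (hf : AntilipschitzWith K f)
    (hcont : Continuous f) (A : Set Y) : upperBoxDim A ≤ upperBoxDim (f '' A) := by
  have hf' : AntilipschitzWith (K + 1) f := .of_le_mul_dist fun x y =>
    (hf.le_mul_dist x y).trans (by gcongr; simp)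
  refine upperBoxDim_le_of_eventually_coverNum_le_coverNum (a := ((K : ℝ) + 1)⁻¹)
    (by positivity) ?_
  filter_upwards [self_mem_nhdsWithin] with δ (hδ : 0 < δ)
  have h := coverNum_le_coverNum_image hf' hcont A (δ := ((K : ℝ) + 1)⁻¹ * δ) (by positivity)
  rwa [NNReal.coe_add, NNReal.coe_one, mul_inv_cancel_left₀ (by positivity)] at h

end UpperBoxDim

section Packing

variable {X : Type*} [MetricSpace X]

lemma packingPre_empty (G : ℝ → ℝ) : packingPre G (∅ : Set X) = 0 := by
  refine nonpos_iff_eq_zero.1 (iInf₂_le_of_le 1 one_pos (iSup_le fun p => ?_))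
  refine iSup₂_le fun c r => iSup₂_le fun hp _ => ?_
  obtain rfl : p = ∅ := eq_empty_of_forall_notMem fun n hn => (hp n hn).1
  simp

lemma packingMeasure_le_packingPre (G : ℝ → ℝ) (F : Set X) :
    packingMeasure G F ≤ packingPre G F := by
  classical
  refine iInf₂_le_of_le (fun n => if n = 0 then F else ∅)
    (subset_iUnion_of_subset 0 (by simp)) (le_of_eq ?_)
  rw [tsum_eq_single 0 fun n hn => by simp [hn, packingPre_empty]]
  rfl

lemma lt_dist_of_disjoint_closedBall {x y : X} {r r' : ℝ} (hr' : 0 ≤ r')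
    (h : Disjoint (closedBall x r) (closedBall y r')) : r < dist x y :=
  not_le.1 fun hle => disjoint_left.1 h (mem_closedBall.2 (dist_comm x y ▸ hle))
    (mem_closedBall_self hr')

lemma exists_lt_le_half_pow_mul {x δ : ℝ} (hx : 0 < x) (hxδ : x ≤ δ) :
    ∃ j : ℕ, δ * 2⁻¹ ^ j / 2 < x ∧ x ≤ δ * 2⁻¹ ^ j := by
  have hδ := hx.trans_le hxδ
  obtain ⟨j, hj1, hj2⟩ := exists_nat_pow_near_of_lt_one (div_pos hx hδ) ((div_le_one hδ).2 hxδ)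
    (by norm_num : (0 : ℝ) < 2⁻¹) (by norm_num)
  refine ⟨j, ?_, ((div_le_iff₀ hδ).1 hj2).trans_eq (mul_comm _ _)⟩
  calc δ * 2⁻¹ ^ j / 2 = 2⁻¹ ^ (j + 1) * δ := by ring
    _ < x := (lt_div_iff₀ hδ).1 hj1

lemma tsum_ofReal_rpow_half_pow_ne_top {δ t s : ℝ} (hδ : 0 < δ) (hts : t < s) :
    ∑' j : ℕ, ENNReal.ofReal ((δ * 2⁻¹ ^ j / 8) ^ (-t) * (δ * 2⁻¹ ^ j) ^ s) ≠ ⊤ := by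
  have hterm (j : ℕ) : (δ * 2⁻¹ ^ j / 8) ^ (-t) * (δ * 2⁻¹ ^ j) ^ s =
      8 ^ t * δ ^ (s - t) * (2⁻¹ ^ (s - t)) ^ j := by
    have hβ : 0 < δ * 2⁻¹ ^ j := by positivity
    rw [Real.div_rpow hβ.le (by norm_num), div_eq_mul_inv,
      ← Real.rpow_neg (by norm_num : (0 : ℝ) ≤ 8), neg_neg, mul_right_comm,
      ← Real.rpow_add hβ, neg_add_eq_sub, Real.mul_rpow hδ.le (by positivity),
      ← Real.rpow_pow_comm (by norm_num)]
    ring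
  rw [← ENNReal.ofReal_tsum_of_nonneg (fun j => by positivity)]
  · exact ENNReal.ofReal_ne_top
  simp only [hterm]
  exact (summable_geometric_of_lt_one (by positivity)
    (Real.rpow_lt_one (by norm_num) (by norm_num) (sub_pos.2 hts))).mul_left _

variable [CompactSpace X]

/-- Disjoint balls of comparable radii centred in `F` have `β / 4`-separated centres. -/
lemma tsum_rpow_le_coverNum_mul {F : Set X} {A : Set ℕ} {c : ℕ → X} {r : ℕ → ℝ} {β s : ℝ}
    (hβ : 0 < β) (hs : 0 ≤ s) (hA : ∀ n ∈ A, c n ∈ F ∧ β / 2 < 2 * r n ∧ 2 * r n ≤ β)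
    (hdisj : A.PairwiseDisjoint fun n => closedBall (c n) (r n)) :
    ∑' n : A, ENNReal.ofReal ((2 * r n) ^ s) ≤ coverNum F (β / 8) * ENNReal.ofReal (β ^ s) := by
  rw [ENNReal.tsum_eq_iSup_sum]
  refine iSup_le fun u => ?_
  have hsep : (u : Set A).Pairwise fun i j => β / 4 ≤ dist (c i) (c j) := fun i _ j _ hij => by
    have hr : 0 ≤ r j := by linarith [(hA j j.2).2.1]
    have := lt_dist_of_disjoint_closedBall hr (hdisj i.2 j.2 (Subtype.coe_injective.ne hij))
    linarith [(hA i i.2).2.1]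
  calc ∑ n ∈ u, ENNReal.ofReal ((2 * r n) ^ s) ≤ ∑ _n ∈ u, ENNReal.ofReal (β ^ s) :=
        Finset.sum_le_sum fun n _ => ENNReal.ofReal_le_ofReal <|
          Real.rpow_le_rpow (by linarith [(hA n n.2).2.1]) (hA n n.2).2.2 hs
    _ = u.card * ENNReal.ofReal (β ^ s) := by rw [Finset.sum_const, nsmul_eq_mul]
    _ ≤ coverNum F (β / 8) * ENNReal.ofReal (β ^ s) := by
        gcongr
        exact card_le_coverNum (fun n _ => (hA n n.2).1) hsep (by linarith)

end Packing

section PackingDim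

variable {X : Type*} [MetricSpace X]

lemma exists_inter_ball_subset_closure {F : Set X} (hF : IsCompact F) (hne : F.Nonempty)
    {E : ℕ → Set X} (hcov : F ⊆ ⋃ n, E n) :
    ∃ n, ∃ x ∈ F, ∃ ρ > 0, F ∩ ball x ρ ⊆ closure (E n) := by
  have := isCompact_iff_compactSpace.1 hF
  have := hne.to_subtype
  obtain ⟨n, ⟨x, hx⟩, hxint⟩ := nonempty_interior_of_iUnion_of_closed
    (f := fun n => ((↑) : F → X) ⁻¹' closure (E n))
    (fun n => isClosed_closure.preimage continuous_subtype_val)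
    (iUnion_eq_univ_iff.2 fun y => (mem_iUnion.1 (hcov y.2)).imp fun n hn => subset_closure hn)
  obtain ⟨ρ, hρ, hball⟩ := Metric.isOpen_iff.1 isOpen_interior _ hxint
  refine ⟨n, x, hx, ρ, hρ, fun y ⟨hyF, hy⟩ => ?_⟩
  exact interior_subset (s := ((↑) : F → X) ⁻¹' closure (E n))
    (hball (show (⟨y, hyF⟩ : F) ∈ ball ⟨x, hx⟩ ρ from hy))

variable [CompactSpace X]

/-- Sorting the balls of a `δ₁`-packing into dyadic scales `β j = δ₁ 2⁻ʲ`, the count at scale `j`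
is at most `N_{β j / 8}(F) ≤ (β j / 8)^{-t}`, so the packing sum is dominated by a geometric
series as soon as `t < s`. -/
lemma packingPre_ne_top_of_upperBoxDim_lt {F : Set X} {s : ℝ}
    (h : upperBoxDim F < ENNReal.ofReal s) : packingPre (fun t => t ^ s) F ≠ ⊤ := by
  obtain ⟨t, ht, hFt, hts⟩ := ENNReal.lt_iff_exists_real_btwn.1 h
  replace hts := (ENNReal.ofReal_lt_ofReal_iff'.1 hts).1
  obtain ⟨δ₁, hδ₁, hN⟩ :=
    (nhdsGT_basis (0 : ℝ)).eventually_iff.1 (eventually_coverNum_le_of_upperBoxDim_lt hFt)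
  set β : ℕ → ℝ := fun j => δ₁ * 2⁻¹ ^ j
  have hβpos (j : ℕ) : 0 < β j := by positivity
  have hβle (j : ℕ) : β j ≤ δ₁ :=
    mul_le_of_le_one_right hδ₁.le (pow_le_one₀ (by norm_num) (by norm_num))
  refine ne_top_of_le_ne_top (tsum_ofReal_rpow_half_pow_ne_top hδ₁ hts)
    (iInf₂_le_of_le δ₁ hδ₁ (iSup_le fun p => ?_))
  refine iSup₂_le fun c r => iSup₂_le fun hp hdisj => ?_
  let A : ℕ → Set ℕ := fun j => {n | n ∈ p ∧ β j / 2 < 2 * r n ∧ 2 * r n ≤ β j}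
  have hpA : p ⊆ ⋃ j, A j := fun n hn =>
    let ⟨j, hj⟩ := exists_lt_le_half_pow_mul (by linarith [(hp n hn).2.1]) (hp n hn).2.2
    mem_iUnion.2 ⟨j, hn, hj⟩
  calc ∑' n : p, ENNReal.ofReal ((2 * r n) ^ s)
      ≤ ∑' n : ⋃ j, A j, ENNReal.ofReal ((2 * r n) ^ s) :=
        ENNReal.tsum_mono_subtype (fun n => ENNReal.ofReal ((2 * r n) ^ s)) hpA
    _ ≤ ∑' j, ∑' n : A j, ENNReal.ofReal ((2 * r n) ^ s) :=
        ENNReal.tsum_iUnion_le_tsum (fun n => ENNReal.ofReal ((2 * r n) ^ s)) A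
    _ ≤ ∑' j, coverNum F (β j / 8) * ENNReal.ofReal (β j ^ s) :=
        ENNReal.tsum_le_tsum fun j => tsum_rpow_le_coverNum_mul (hβpos j) (ht.trans hts.le)
          (fun n hn => ⟨(hp n hn.1).1, hn.2⟩) (hdisj.subset fun n hn => hn.1)
    _ ≤ ∑' j, ENNReal.ofReal ((β j / 8) ^ (-t) * β j ^ s) := ENNReal.tsum_le_tsum fun j => by
        rw [ENNReal.ofReal_mul (by positivity)]
        gcongr
        exact hN ⟨by positivity, by linarith [hβle j, hβpos j]⟩

/-- A maximal `η / 2`-separated family in `E` carries `≥ η^{-s'}` disjoint balls of diameter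
`η / 4`, whose total `s`-content `η^{-s'} (η / 4)^s` is unbounded as `η → 0` when `s < s'`. -/
lemma packingPre_eq_top_of_lt_upperBoxDim {E : Set X} {s : ℝ}
    (h : ENNReal.ofReal s < upperBoxDim E) : packingPre (fun t => t ^ s) E = ⊤ := by
  obtain ⟨s', hs', hss', hs'E⟩ := ENNReal.lt_iff_exists_real_btwn.1 h
  replace hss' := (ENNReal.ofReal_lt_ofReal_iff'.1 hss').1
  have hE : E.Nonempty := nonempty_iff_ne_empty.2 fun hE => by simp [hE, upperBoxDim_empty] at h
  refine iInf_eq_top.2 fun δ => iInf_eq_top.2 fun hδ =>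
    ENNReal.eq_top_of_forall_nnreal_le fun M => ?_
  have hgrowth : Tendsto (fun η : ℝ => η ^ (-s') * (η / 4) ^ s) (𝓝[>] 0) atTop := by
    refine ((tendsto_rpow_neg_nhdsGT_zero (sub_neg.2 hss')).const_mul_atTop
      (by positivity : (0 : ℝ) < 4⁻¹ ^ s)).congr' ?_
    filter_upwards [self_mem_nhdsWithin] with η (hη : 0 < η)
    rw [sub_eq_add_neg, Real.rpow_add hη, Real.inv_rpow (by norm_num),
      Real.div_rpow hη.le (by norm_num)]
    ring
  obtain ⟨η, hNη, hMη, hη, hηδ⟩ :=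
    ((frequently_lt_coverNum_of_lt_upperBoxDim hs' hs'E).and_eventually
      ((hgrowth.eventually_ge_atTop (M : ℝ)).and (Ioo_mem_nhdsGT hδ))).exists
  obtain ⟨n, c, hcE, hsep, hcov⟩ := exists_separated_coverNum_two_mul_le hE (half_pos hη)
  rw [mul_div_cancel₀ _ two_ne_zero] at hcov
  have hcond : ∀ i ∈ (↑(Finset.range n) : Set ℕ), c i ∈ E ∧ 0 < η / 8 ∧ 2 * (η / 8) ≤ δ :=
    fun i hi => ⟨hcE i (by simpa using hi), by positivity, by linarith⟩
  have hdisj : (↑(Finset.range n) : Set ℕ).PairwiseDisjoint fun i => closedBall (c i) (η / 8) :=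
    hsep.mono' fun i j hij => closedBall_disjoint_closedBall (by linarith)
  refine le_trans ?_ <| le_iSup_of_le (↑(Finset.range n) : Set ℕ) <| le_iSup_of_le c <|
    le_iSup_of_le (fun _ => η / 8) <| le_iSup_of_le hcond <| le_iSup_of_le hdisj le_rfl
  calc (M : ℝ≥0∞) ≤ ENNReal.ofReal (η ^ (-s')) * ENNReal.ofReal ((η / 4) ^ s) := by
        rw [← ENNReal.ofReal_mul (by positivity), ← ENNReal.ofReal_coe_nnreal]
        exact ENNReal.ofReal_le_ofReal hMη
    _ ≤ n * ENNReal.ofReal ((2 * (η / 8)) ^ s) := by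
        rw [show 2 * (η / 8) = η / 4 by ring]
        gcongr
        exact hNη.le.trans hcov
    _ = ∑' _i : (↑(Finset.range n) : Set ℕ), ENNReal.ofReal ((2 * (η / 8)) ^ s) := by
        rw [ENNReal.tsum_set_const, Set.encard_coe_eq_coe_finsetCard, Finset.card_range]
        rfl

lemma packingDim_le_upperBoxDim (F : Set X) : packingDim F ≤ upperBoxDim F :=
  iSup₂_le fun _s _ => iSup_le fun htop => not_lt.1 fun hlt =>
    packingPre_ne_top_of_upperBoxDim_lt hlt (top_le_iff.1 (htop ▸ packingMeasure_le_packingPre _ F))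

theorem upperBoxDim_le_packingDim_of_forall_ball {F : Set X} (hF : IsCompact F)
    (h : ∀ x ∈ F, ∀ ρ > 0, ∃ A ⊆ F ∩ ball x ρ, upperBoxDim F ≤ upperBoxDim A) :
    upperBoxDim F ≤ packingDim F := by
  refine le_of_forall_lt_imp_le_of_dense fun c hc => ?_
  lift c to ℝ≥0 using hc.ne_top
  rw [← ENNReal.ofReal_coe_nnreal] at hc ⊢
  refine le_iSup_of_le (c : ℝ) <| le_iSup_of_le c.2 <| le_iSup_of_le ?_ le_rfl
  have hne : F.Nonempty := nonempty_iff_ne_empty.2 fun hF => by simp [hF, upperBoxDim_empty] at hc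
  refine iInf_eq_top.2 fun E => iInf_eq_top.2 fun hE => ENNReal.tsum_eq_top_of_eq_top ?_
  obtain ⟨n, x, hx, ρ, hρ, hsub⟩ := exists_inter_ball_subset_closure hF hne hE
  obtain ⟨A, hA, hFA⟩ := h x hx ρ hρ
  refine ⟨n, packingPre_eq_top_of_lt_upperBoxDim ?_⟩
  calc ENNReal.ofReal c < upperBoxDim F := hc
    _ ≤ upperBoxDim A := hFA
    _ ≤ upperBoxDim (closure (E n)) := upperBoxDim_mono (hA.trans hsub)
    _ ≤ upperBoxDim (E n) := upperBoxDim_closure_le _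

end PackingDim

namespace IsBiLipContraction

variable {X : Type*} [MetricSpace X] {φ : X → X}

lemma exists_lipschitzWith (h : IsBiLipContraction φ) : ∃ C : ℝ≥0, C < 1 ∧ LipschitzWith C φ :=
  let ⟨_, C, _, hC, hφ⟩ := h
  ⟨C.toNNReal, Real.toNNReal_lt_one.2 hC, .of_dist_le' fun x y => (hφ x y).2⟩

lemma exists_antilipschitzWith (h : IsBiLipContraction φ) : ∃ K : ℝ≥0, AntilipschitzWith K φ :=
  let ⟨c, _, hc, _, hφ⟩ := h
  ⟨c⁻¹.toNNReal, .of_le_mul_dist fun x y => by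
    rw [Real.coe_toNNReal _ (inv_nonneg.2 hc.le), le_inv_mul_iff₀ hc]
    exact (hφ x y).1⟩

lemma continuous (h : IsBiLipContraction φ) : Continuous φ :=
  let ⟨_, _, hφ⟩ := h.exists_lipschitzWith
  hφ.continuous

lemma injective (h : IsBiLipContraction φ) : Function.Injective φ :=
  let ⟨_, hφ⟩ := h.exists_antilipschitzWith
  hφ.injective

lemma exists_lipschitzWith_of_finite {ι : Type*} [Finite ι] {f : ι → X → X}
    (hf : ∀ i, IsBiLipContraction (f i)) : ∃ C : ℝ≥0, C < 1 ∧ ∀ i, LipschitzWith C (f i) := by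
  have := Fintype.ofFinite ι
  choose C hC hfC using fun i => (hf i).exists_lipschitzWith
  exact ⟨Finset.univ.sup C, (Finset.sup_lt_iff zero_lt_one).2 fun i _ => hC i,
    fun i => (hfC i).weaken (Finset.le_sup (Finset.mem_univ i))⟩

end IsBiLipContraction

section Attractor

variable {X : Type*} {N : ℕ} {m : Fin N → ℕ} {S : ∀ i, Fin (m i) → X → X}

lemma levelSets_succ_subset (ω : ℕ → Fin N) (k : ℕ) :
    levelSets m S univ ω (k + 1) ⊆ levelSets m S univ ω k := by
  induction k generalizing ω with
  | zero => exact subset_univ _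
  | succ k ih => exact iUnion_mono fun j => image_mono (ih _)

lemma levelSets_antitone (ω : ℕ → Fin N) : Antitone (levelSets m S univ ω) :=
  antitone_nat_of_succ_le (levelSets_succ_subset ω)

lemma attractorOf_eq_iUnion (hS : ∀ i j, Function.Injective (S i j)) (ω : ℕ → Fin N) :
    attractorOf m S univ ω = ⋃ j, S (ω 0) j '' attractorOf m S univ (fun n => ω (n + 1)) := by
  calc attractorOf m S univ ω = ⋂ k, levelSets m S univ ω (k + 1) :=
        ((levelSets_antitone ω).iInter_nat_add 1).symm
    _ = ⋃ j, ⋂ k, S (ω 0) j '' levelSets m S univ (fun n => ω (n + 1)) k :=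
        iInter_iUnion_of_antitone fun j _ _ hkk' => image_mono (levelSets_antitone _ hkk')
    _ = ⋃ j, S (ω 0) j '' attractorOf m S univ (fun n => ω (n + 1)) :=
        iUnion_congr fun j => ((hS _ j).injOn.image_iInter_eq).symm

lemma isCompact_levelSets [TopologicalSpace X] [CompactSpace X] (hS : ∀ i j, Continuous (S i j))
    (k : ℕ) (ω : ℕ → Fin N) : IsCompact (levelSets m S univ ω k) := by
  induction k generalizing ω with
  | zero => exact isCompact_univ
  | succ k ih => exact isCompact_iUnion fun j => (ih _).image (hS _ j)

lemma isCompact_attractorOf [TopologicalSpace X] [T2Space X] [CompactSpace X]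
    (hS : ∀ i j, Continuous (S i j)) (ω : ℕ → Fin N) :
    IsCompact (attractorOf m S univ ω) :=
  (isClosed_iInter fun k => (isCompact_levelSets hS k ω).isClosed).isCompact

variable [MetricSpace X]

lemma exists_biLipschitz_image_attractorOf_subset (hS : ∀ i j, IsBiLipContraction (S i j))
    {C : ℝ≥0} (hC : ∀ i j, LipschitzWith C (S i j)) (k : ℕ) (ω : ℕ → Fin N) :
    ∀ x ∈ attractorOf m S univ ω, ∃ φ : X → X, LipschitzWith (C ^ k) φ ∧
      (∃ K, AntilipschitzWith K φ) ∧ x ∈ φ '' attractorOf m S univ (fun n => ω (n + k)) ∧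
      φ '' attractorOf m S univ (fun n => ω (n + k)) ⊆ attractorOf m S univ ω := by
  induction k generalizing ω with
  | zero =>
    exact fun x hx => ⟨id, by simpa using LipschitzWith.id, ⟨1, .id⟩, by simpa using hx, by simp⟩
  | succ k ih =>
    intro x hx
    have hF := attractorOf_eq_iUnion (fun i j => (hS i j).injective) ω
    rw [hF] at hx
    obtain ⟨j, y, hy, rfl⟩ := mem_iUnion.1 hx
    obtain ⟨ψ, hψL, ⟨K, hψA⟩, hyψ, hψF⟩ := ih _ y hy
    obtain ⟨K', hSA⟩ := (hS (ω 0) j).exists_antilipschitzWith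
    refine ⟨S (ω 0) j ∘ ψ, pow_succ' C k ▸ (hC _ _).comp hψL, ⟨K * K', hSA.comp hψA⟩, ?_, ?_⟩
    · rw [image_comp]
      exact mem_image_of_mem _ hyψ
    · rw [image_comp, hF]
      exact (image_mono hψF).trans (subset_iUnion_of_subset j subset_rfl)

variable [CompactSpace X]

lemma upperBoxDim_attractorOf_le_shift (hS : ∀ i j, IsBiLipContraction (S i j))
    (ω : ℕ → Fin N) :
    upperBoxDim (attractorOf m S univ ω) ≤
      upperBoxDim (attractorOf m S univ (fun n => ω (n + 1))) := by
  rw [attractorOf_eq_iUnion (fun i j => (hS i j).injective) ω]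
  refine (upperBoxDim_iUnion_le _).trans (iSup_le fun j => ?_)
  obtain ⟨C, -, hC⟩ := (hS (ω 0) j).exists_lipschitzWith
  exact upperBoxDim_image_le hC _

lemma upperBoxDim_attractorOf_le_shift_add (hS : ∀ i j, IsBiLipContraction (S i j)) (k : ℕ)
    (ω : ℕ → Fin N) :
    upperBoxDim (attractorOf m S univ ω) ≤
      upperBoxDim (attractorOf m S univ (fun n => ω (n + k))) := by
  induction k generalizing ω with
  | zero => exact le_rfl
  | succ k ih => exact (upperBoxDim_attractorOf_le_shift hS ω).trans (ih _)

lemma exists_subset_inter_ball_le_upperBoxDim (hS : ∀ i j, IsBiLipContraction (S i j))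
    (ω : ℕ → Fin N) : ∀ x ∈ attractorOf m S univ ω, ∀ ρ > 0,
      ∃ A ⊆ attractorOf m S univ ω ∩ ball x ρ,
        upperBoxDim (attractorOf m S univ ω) ≤ upperBoxDim A := by
  intro x hx ρ hρ
  obtain ⟨C, hC1, hC⟩ := IsBiLipContraction.exists_lipschitzWith_of_finite
    (f := fun p : Σ i, Fin (m i) => S p.1 p.2) fun p => hS p.1 p.2
  obtain ⟨k, hk⟩ : ∃ k : ℕ, (C : ℝ) ^ k * diam (univ : Set X) < ρ :=
    (((tendsto_pow_atTop_nhds_zero_of_lt_one C.2 hC1).mul_const _).eventually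
      (gt_mem_nhds (by rwa [zero_mul]))).exists
  obtain ⟨φ, hφL, ⟨K, hφA⟩, ⟨z, -, rfl⟩, hφF⟩ :=
    exists_biLipschitz_image_attractorOf_subset hS (fun i j => hC ⟨i, j⟩) k ω x hx
  refine ⟨φ '' attractorOf m S univ (fun n => ω (n + k)), subset_inter hφF ?_, ?_⟩
  · rintro _ ⟨y, -, rfl⟩
    calc dist (φ y) (φ z) ≤ (C : ℝ) ^ k * dist y z := by simpa using hφL.dist_le_mul y z
      _ ≤ (C : ℝ) ^ k * diam (univ : Set X) := by
        gcongr
        exact dist_le_diam_of_mem isBounded_of_compactSpace (mem_univ y) (mem_univ z)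
      _ < ρ := hk
  · exact (upperBoxDim_attractorOf_le_shift_add hS k ω).trans
      (le_upperBoxDim_image hφA hφL.continuous _)

end Attractor

theorem packingDim_eq_upperBoxDim_attractor_general {K : Type*} [MetricSpace K] [CompactSpace K]
    {N : ℕ} (m : Fin N → ℕ)
    (S : ∀ i, Fin (m i) → K → K) (hS : ∀ i j, IsBiLipContraction (S i j)) :
    ∀ ω : ℕ → Fin N,
      packingDim (attractorOf m S Set.univ ω) = upperBoxDim (attractorOf m S Set.univ ω) :=
  fun ω => le_antisymm (packingDim_le_upperBoxDim _) <|
    upperBoxDim_le_packingDim_of_forall_ball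
      (isCompact_attractorOf (fun i j => (hS i j).continuous) ω)
      (exists_subset_inter_ball_le_upperBoxDim hS ω)

/-- For every `ω`, the packing dimension and the upper box dimension of the random
attractor `F_ω` coincide. -/
theorem packingDim_eq_upperBoxDim_attractor {K : Type*} [MetricSpace K] [CompactSpace K] [Nonempty K]
    {N : ℕ} (hN : 0 < N) (m : Fin N → ℕ) (hm : ∀ i, 0 < m i)
    (S : ∀ i, Fin (m i) → K → K) (hS : ∀ i j, IsBiLipContraction (S i j)) :
    ∀ ω : ℕ → Fin N,
      packingDim (attractorOf m S Set.univ ω) = upperBoxDim (attractorOf m S Set.univ ω) :=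
  packingDim_eq_upperBoxDim_attractor_general m S hS
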